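/- The expected number of parts of a uniformly random Arndt composition of n is asymptotically (3/√5 − 1)·n; that is, the real sequence p(n) / (F_n · n) tends to 3/√5 − 1 as n → ∞. -/

import Mathlib

/-- `l` is a composition of `n`: a finite list of positive integers summing to `n`
(the empty list is the unique composition of `0`). -/
def IsComposition (n : ℕ) (l : List ℕ) : Prop :=
  (∀ x ∈ l, 0 < x) ∧ l.sum = n

/-- The Arndt condition: `σ_{2i-1} > σ_{2i}` (1-based) for every `i` with `2i ≤ ℓ`;
with 0-based indices, `l[2i] > l[2i+1]` whenever `2i+1 < l.length`. -/
def IsArndt (l : List ℕ) : Prop :=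
  ∀ i : ℕ, 2 * i + 1 < l.length → l.getD (2 * i + 1) 0 < l.getD (2 * i) 0

/-- `arndt n` is the number of Arndt compositions of `n`. -/
noncomputable def arndt (n : ℕ) : ℕ :=
  Set.ncard {l : List ℕ | IsComposition n l ∧ IsArndt l}

/-- `arndtParts n m` is the number of Arndt compositions of `n` with exactly `m` parts. -/
noncomputable def arndtParts (n m : ℕ) : ℕ :=
  Set.ncard {l : List ℕ | IsComposition n l ∧ IsArndt l ∧ l.length = m}

/-- The generalized binomial coefficient `C(a,b) = a(a-1)⋯(a-b+1)/b!` for an integer `a`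
and a natural number `b` (represented as a nonnegative integer); it is `0` for negative `b`. -/
def genChoose (a b : ℤ) : ℤ :=
  if 0 ≤ b then (∏ i ∈ Finset.range b.toNat, (a - (i : ℤ))) / (b.toNat.factorial : ℤ) else 0

/-- `totalParts n` is the total number of parts summed over all Arndt compositions of `n`. -/
noncomputable def totalParts (n : ℕ) : ℕ :=
  ∑ᶠ l ∈ {l : List ℕ | IsComposition n l ∧ IsArndt l}, l.length

/-!
Cutting off the first pair `(a, b)`, `a > b ≥ 1`, an Arndt composition of `n ≥ 1` is either `[n]`
or `a :: b :: t` with `t` an Arndt composition of `n - a - b`. Any statistic `S` obeying this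
first-pair recursion satisfies `S (n + 3) + S n = S (n + 2) + S (n + 1) + h n`: lowering both parts
of a pair with `b ≥ 2` by one maps the pairs of `n + 2` onto those of `n`, while the pairs `(a, 1)`
contribute `∑_{m < n} h m`. For the number of compositions this is the Fibonacci recurrence; for the
number of parts it gives `p (n + 3) = p (n + 2) + p (n + 1) + 2 F_n`, solved by
`5 p n = (27 - 8 n) F_n + (6 n - 15) F_{n+1}` for `n ≥ 2`. Since `F_{n+1} / F_n → φ`, the limit is
`(6 φ - 8) / 5 = 3 / √5 - 1`.
-/

open Finset Filter

instance : DecidablePred IsArndt := fun l =>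
  decidable_of_iff (∀ i < l.length, 2 * i + 1 < l.length → l.getD (2 * i + 1) 0 < l.getD (2 * i) 0)
    ⟨fun h i hi => h i (by omega) hi, fun h i _ hi => h i hi⟩

noncomputable def arndtFinset (n : ℕ) : Finset (List ℕ) :=
  (univ.image (Composition.blocks (n := n))).filter IsArndt

theorem mem_arndtFinset {n : ℕ} {l : List ℕ} :
    l ∈ arndtFinset n ↔ IsComposition n l ∧ IsArndt l := by
  simp only [arndtFinset, mem_filter, mem_image, mem_univ, true_and]
  constructor
  · rintro ⟨⟨c, rfl⟩, h⟩
    exact ⟨⟨fun _ => c.blocks_pos, c.blocks_sum⟩, h⟩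
  · rintro ⟨⟨hpos, hsum⟩, h⟩
    exact ⟨⟨⟨l, hpos _, hsum⟩, rfl⟩, h⟩

theorem coe_arndtFinset (n : ℕ) :
    ↑(arndtFinset n) = {l : List ℕ | IsComposition n l ∧ IsArndt l} :=
  Set.ext fun _ => mem_arndtFinset

theorem arndt_eq_card (n : ℕ) : arndt n = (arndtFinset n).card := by
  rw [arndt, ← coe_arndtFinset, Set.ncard_coe_finset]

theorem totalParts_eq_sum (n : ℕ) : totalParts n = ∑ l ∈ arndtFinset n, l.length := by
  rw [totalParts, ← coe_arndtFinset, finsum_mem_coe_finset]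

theorem arndtFinset_zero : arndtFinset 0 = {[]} := by
  ext l
  simp only [mem_arndtFinset, IsComposition, mem_singleton]
  constructor
  · rintro ⟨⟨hpos, hsum⟩, -⟩
    rcases l with _ | ⟨a, t⟩
    · rfl
    · have := hpos a (by simp)
      simp only [List.sum_cons] at hsum
      omega
  · rintro rfl
    exact ⟨⟨by simp, rfl⟩, fun i hi => by simp at hi⟩

theorem isArndt_singleton (a : ℕ) : IsArndt [a] := fun i hi => by simp at hi

theorem isArndt_cons_cons {a b : ℕ} {l : List ℕ} :
    IsArndt (a :: b :: l) ↔ b < a ∧ IsArndt l := by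
  have shift (i : ℕ) : 2 * (i + 1) = 2 * i + 1 + 1 := by ring
  constructor
  · intro h
    refine ⟨by simpa using h 0 (by simp), fun i hi => ?_⟩
    simpa [shift] using h (i + 1) (by simp only [List.length_cons]; omega)
  · rintro ⟨hba, h⟩ (_ | i) hi
    · simpa using hba
    · simpa [shift] using h i (by simp only [List.length_cons] at hi; omega)

def arndtPairs (n : ℕ) : Finset (ℕ × ℕ) :=
  (range (n + 1) ×ˢ range (n + 1)).filter fun q => 0 < q.2 ∧ q.2 < q.1 ∧ q.1 + q.2 ≤ n

theorem mem_arndtPairs {n : ℕ} {q : ℕ × ℕ} :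
    q ∈ arndtPairs n ↔ 0 < q.2 ∧ q.2 < q.1 ∧ q.1 + q.2 ≤ n := by
  simp only [arndtPairs, mem_filter, mem_product, mem_range]
  omega

theorem cons_cons_mem_arndtFinset {n a b : ℕ} {t : List ℕ} :
    a :: b :: t ∈ arndtFinset n ↔ (a, b) ∈ arndtPairs n ∧ t ∈ arndtFinset (n - a - b) := by
  simp only [mem_arndtFinset, IsComposition, isArndt_cons_cons, mem_arndtPairs, List.mem_cons,
    List.sum_cons, forall_eq_or_imp]
  constructor
  · rintro ⟨⟨⟨ha, hb, ht⟩, hsum⟩, hba, harndt⟩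
    exact ⟨⟨hb, hba, by omega⟩, ⟨ht, by omega⟩, harndt⟩
  · rintro ⟨⟨hb, hba, hn⟩, ⟨ht, hsum⟩, harndt⟩
    exact ⟨⟨⟨by omega, hb, ht⟩, by omega⟩, hba, harndt⟩

theorem arndtFinset_eq_insert {n : ℕ} (hn : 1 ≤ n) :
    arndtFinset n = insert [n] (((arndtPairs n).sigma fun q => arndtFinset (n - q.1 - q.2)).image
      fun x => x.1.1 :: x.1.2 :: x.2) := by
  ext l
  rw [mem_insert, mem_image]
  rcases l with _ | ⟨a, _ | ⟨b, t⟩⟩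
  · simp [mem_arndtFinset, IsComposition]
    omega
  · simp [mem_arndtFinset, IsComposition, isArndt_singleton]
    omega
  · simp [cons_cons_mem_arndtFinset]

section

variable {M : Type*} [AddCommMonoid M]

theorem sum_arndtFinset {n : ℕ} (hn : 1 ≤ n) (f : List ℕ → M) :
    ∑ l ∈ arndtFinset n, f l
      = f [n] + ∑ q ∈ arndtPairs n, ∑ l ∈ arndtFinset (n - q.1 - q.2), f (q.1 :: q.2 :: l) := by
  have hinj : Function.Injective fun x : (_ : ℕ × ℕ) × List ℕ => x.1.1 :: x.1.2 :: x.2 :=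
    fun x y h => by simpa [Sigma.ext_iff, Prod.ext_iff, and_assoc] using h
  rw [arndtFinset_eq_insert hn, sum_insert (by simp), sum_image hinj.injOn, sum_sigma]

theorem sum_arndtPairs_add_two (n : ℕ) (h : ℕ → M) :
    ∑ q ∈ arndtPairs (n + 2), h (n + 2 - q.1 - q.2)
      = ∑ q ∈ arndtPairs n, h (n - q.1 - q.2) + ∑ m ∈ range n, h m := by
  rw [← sum_filter_not_add_sum_filter _ (fun q => q.2 = 1)]
  congr 1
  · refine (sum_nbij' (fun q => (q.1 + 1, q.2 + 1)) (fun q => (q.1 - 1, q.2 - 1))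
      ?_ ?_ ?_ ?_ ?_).symm
    all_goals
      intro q hq
      simp only [mem_filter, mem_arndtPairs, Prod.ext_iff] at hq ⊢
      first | omega | (congr 1; omega)
  · refine (sum_nbij' (fun m => (n + 1 - m, 1)) (fun q => n + 1 - q.1) ?_ ?_ ?_ ?_ ?_).symm
    all_goals
      intro q hq
      simp only [mem_filter, mem_range, mem_arndtPairs, Prod.ext_iff, and_true] at hq ⊢
      first | omega | (congr 1; omega)

def FirstPairRec (S : ℕ → M) (c : M) (h : ℕ → M) : Prop :=
  ∀ n, 1 ≤ n → S n = c + ∑ q ∈ arndtPairs n, h (n - q.1 - q.2)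

namespace FirstPairRec

variable {S h : ℕ → M} {c : M}

theorem one (hS : FirstPairRec S c h) : S 1 = c := by
  rw [hS 1 le_rfl, show arndtPairs 1 = ∅ by decide, sum_empty, add_zero]

theorem two (hS : FirstPairRec S c h) : S 2 = c := by
  rw [hS 2 (by omega), show arndtPairs 2 = ∅ by decide, sum_empty, add_zero]

theorem three (hS : FirstPairRec S c h) : S 3 = c + h 0 := by
  rw [hS 3 (by omega), show arndtPairs 3 = {(2, 1)} by decide, sum_singleton]
  rfl

theorem add_two (hS : FirstPairRec S c h) {n : ℕ} (hn : 1 ≤ n) :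
    S (n + 2) = S n + ∑ m ∈ range n, h m := by
  rw [hS (n + 2) (by omega), sum_arndtPairs_add_two, ← add_assoc, ← hS n hn]

theorem add_three_add (hS : FirstPairRec S c h) {n : ℕ} (hn : 1 ≤ n) :
    S (n + 3) + S n = S (n + 2) + S (n + 1) + h n := by
  rw [hS.add_two (n := n + 1) (by omega), hS.add_two hn, sum_range_succ]
  abel

end FirstPairRec

end

theorem firstPairRec_arndt : FirstPairRec arndt 1 arndt := fun n hn => by
  simp only [arndt_eq_card, card_eq_sum_ones, sum_arndtFinset hn]

theorem firstPairRec_totalParts :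
    FirstPairRec totalParts 1 fun m => totalParts m + 2 * arndt m := fun n hn => by
  simp only [totalParts_eq_sum, arndt_eq_card, card_eq_sum_ones, sum_arndtFinset hn,
    List.length_cons, List.length_nil, zero_add, mul_one, add_assoc, one_add_one_eq_two, mul_sum,
    ← sum_add_distrib]

theorem arndt_zero : arndt 0 = 1 := by
  rw [arndt_eq_card, arndtFinset_zero, card_singleton]

theorem totalParts_zero : totalParts 0 = 0 := by
  rw [totalParts_eq_sum, arndtFinset_zero, sum_singleton, List.length_nil]

theorem arndt_eq_fib : ∀ {n : ℕ}, 1 ≤ n → arndt n = Nat.fib n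
  | 1, _ => firstPairRec_arndt.one
  | 2, _ => firstPairRec_arndt.two
  | 3, _ => by rw [firstPairRec_arndt.three, arndt_zero]; rfl
  | n + 4, _ => by
    have h : arndt (n + 4) + arndt (n + 1) = arndt (n + 3) + arndt (n + 2) + arndt (n + 1) :=
      firstPairRec_arndt.add_three_add (by omega)
    rw [arndt_eq_fib (n := n + 3) (by omega), arndt_eq_fib (n := n + 2) (by omega)] at h
    have hfib : Nat.fib (n + 4) = Nat.fib (n + 2) + Nat.fib (n + 3) := Nat.fib_add_two
    omega

theorem totalParts_add_three {n : ℕ} (hn : 1 ≤ n) :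
    totalParts (n + 3) = totalParts (n + 2) + totalParts (n + 1) + 2 * Nat.fib n := by
  have h := firstPairRec_totalParts.add_three_add hn
  rw [arndt_eq_fib hn] at h
  omega

theorem five_mul_totalParts : ∀ {n : ℕ}, 2 ≤ n →
    (5 : ℝ) * totalParts n = (27 - 8 * n) * Nat.fib n + (6 * n - 15) * Nat.fib (n + 1)
  | 2, _ => by rw [firstPairRec_totalParts.two]; norm_num
  | 3, _ => by
    rw [firstPairRec_totalParts.three, totalParts_zero, arndt_zero]; norm_num
  | n + 4, _ => by
    have h : totalParts (n + 4) = totalParts (n + 3) + totalParts (n + 2) + 2 * Nat.fib (n + 1) :=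
      totalParts_add_three (by omega)
    have h3 := five_mul_totalParts (n := n + 3) (by omega)
    have h2 := five_mul_totalParts (n := n + 2) (by omega)
    have f3 : Nat.fib (n + 3) = Nat.fib (n + 1) + Nat.fib (n + 2) := Nat.fib_add_two
    have f4 : Nat.fib (n + 4) = Nat.fib (n + 2) + Nat.fib (n + 3) := Nat.fib_add_two
    have f5 : Nat.fib (n + 5) = Nat.fib (n + 3) + Nat.fib (n + 4) := Nat.fib_add_two
    rw [h]
    push_cast [f3, f4, f5] at h2 h3 ⊢
    linear_combination h2 + h3

/-- the expected number of parts of a uniformly random Arndt composition of `n`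
is asymptotically `(3/√5 - 1)·n`, i.e. `p(n)/(F_n·n) → 3/√5 - 1`. -/
theorem expected_parts_asymptotic :
    Filter.Tendsto (fun n : ℕ => (totalParts n : ℝ) / ((Nat.fib n : ℝ) * (n : ℝ)))
      Filter.atTop (nhds (3 / Real.sqrt 5 - 1)) := by
  have hinv := tendsto_inv_atTop_nhds_zero_nat (𝕜 := ℝ)
  have hlim := (((hinv.const_mul 27).sub_const 8).add
    (((hinv.const_mul 15).const_sub 6).mul tendsto_fib_succ_div_fib_atTop)).div_const 5
  have hval : (27 * 0 - 8 + (6 - 15 * 0) * Real.goldenRatio) / 5 = 3 / Real.sqrt 5 - 1 := by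
    have h5 : Real.sqrt 5 ≠ 0 := by positivity
    rw [Real.goldenRatio]
    field_simp
    linear_combination 6 * Real.sq_sqrt (show (0 : ℝ) ≤ 5 by norm_num)
  rw [← hval]
  refine hlim.congr' ?_
  filter_upwards [eventually_ge_atTop 2] with n hn
  have hfib : (Nat.fib n : ℝ) ≠ 0 := by exact_mod_cast (Nat.fib_pos.2 (by omega)).ne'
  have hn0 : (n : ℝ) ≠ 0 := by exact_mod_cast (by omega : n ≠ 0)
  field_simp
  linear_combination -five_mul_totalParts hn
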